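/- arXiv:2501.04205 — 2 statements merged into one kernel-verified Lean document; each statement's English description precedes it below -/
import Mathlib

section
/- For integers n and k with |n|/2 ≤ |k| < 2|n| and any real s ≥ 0, there is a constant C (depending only on s) such that |⟨n⟩^s − ⟨k⟩^s| ≤ C ⟨n−k⟩ ⟨k⟩^{s−1}, where ⟨m⟩ := √(1+m²). -/
noncomputable section

/-- Japanese bracket of an integer: ⟨m⟩ = √(1 + m²). -/
def jb (m : ℤ) : ℝ := Real.sqrt (1 + (m : ℝ) ^ 2)

lemma one_le_jb (m : ℤ) : 1 ≤ jb m := by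
  rw [jb]
  have h : Real.sqrt 1 ≤ Real.sqrt (1 + (m:ℝ) ^ 2) :=
    Real.sqrt_le_sqrt (by nlinarith [sq_nonneg ((m:ℝ))])
  simpa using h

-- helper: |x| ≤ √(1 + x²)
lemma aux_le_sqrt (x : ℝ) : |x| ≤ Real.sqrt (1 + x ^ 2) := by
  have h : |x| ^ 2 ≤ 1 + x ^ 2 := by rw [sq_abs]; linarith
  calc |x| = Real.sqrt (|x| ^ 2) := by rw [Real.sqrt_sq (abs_nonneg x)]
    _ ≤ _ := Real.sqrt_le_sqrt h

/-- Lipschitz estimate for the bracket. -/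
lemma jb_sub_jb_abs_le (n k : ℤ) : |jb n - jb k| ≤ jb (n - k) := by
  have hL : ∀ x y : ℝ, Real.sqrt (1 + x ^ 2) - Real.sqrt (1 + y ^ 2) ≤ |x - y| := by
    intro x y
    set a := Real.sqrt (1 + x ^ 2) with ha
    set b := Real.sqrt (1 + y ^ 2) with hb
    have ha2 : a ^ 2 = 1 + x ^ 2 := Real.sq_sqrt (by positivity)
    have hb2 : b ^ 2 = 1 + y ^ 2 := Real.sq_sqrt (by positivity)
    have hax : |x| ≤ a := aux_le_sqrt x
    have hby : |y| ≤ b := aux_le_sqrt y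
    have hb0 : 0 < b := Real.sqrt_pos.mpr (by positivity)
    have ha0 : 0 < a := Real.sqrt_pos.mpr (by positivity)
    have e1 : x ^ 2 - y ^ 2 ≤ |x - y| * |x + y| := by
      calc x ^ 2 - y ^ 2 = (x - y) * (x + y) := by ring
        _ ≤ |(x - y) * (x + y)| := le_abs_self _
        _ = |x - y| * |x + y| := abs_mul _ _
    have e2 : |x + y| ≤ a + b := (abs_add_le x y).trans (add_le_add hax hby)
    have e3 : |x - y| * |x + y| ≤ |x - y| * (a + b) :=
      mul_le_mul_of_nonneg_left e2 (abs_nonneg (x - y))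
    nlinarith [e1, e3, ha0, hb0]
  have h1 : |jb n - jb k| ≤ |(n : ℝ) - (k : ℝ)| := by
    rw [abs_sub_le_iff]
    constructor
    · simpa [jb] using hL (n : ℝ) (k : ℝ)
    · simpa [jb, abs_sub_comm] using hL (k : ℝ) (n : ℝ)
  refine h1.trans ?_
  have := aux_le_sqrt ((n : ℝ) - (k : ℝ))
  simpa [jb] using this

/-- MVT estimate for rpow on a comparable interval. -/
lemma key (s : ℝ) (hs : 0 ≤ s) (a b : ℝ) (ha : 1 ≤ a) (hb : 1 ≤ b)
    (hab : a ≤ 2 * b) (hba : b ≤ 2 * a) :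
    |a ^ s - b ^ s| ≤ s * 2 ^ |s - 1| * b ^ (s - 1) * |a - b| := by
  have hb0 : (0:ℝ) < b := lt_of_lt_of_le one_pos hb
  set S : Set ℝ := Set.Icc (b / 2) (2 * b) with hS
  have hmem : ∀ x ∈ S, (0:ℝ) < x := fun x hx => lt_of_lt_of_le (by linarith) hx.1
  have hderiv : ∀ x ∈ S, HasDerivWithinAt (fun t : ℝ => t ^ s) (s * x ^ (s - 1)) S x := by
    intro x hx
    exact (Real.hasDerivAt_rpow_const (Or.inl (ne_of_gt (hmem x hx)))).hasDerivWithinAt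
  have hbound : ∀ x ∈ S, ‖s * x ^ (s - 1)‖ ≤ s * 2 ^ |s - 1| * b ^ (s - 1) := by
    intro x hx
    have hx0 : 0 < x := hmem x hx
    rw [Real.norm_eq_abs, abs_mul, abs_of_nonneg hs, abs_of_nonneg (Real.rpow_nonneg hx0.le _)]
    rw [mul_assoc]
    refine mul_le_mul_of_nonneg_left ?_ hs
    rcases le_total 1 s with h1 | h1
    · rw [abs_of_nonneg (by linarith : (0:ℝ) ≤ s - 1)]
      calc x ^ (s-1) ≤ (2 * b) ^ (s - 1) :=
            Real.rpow_le_rpow hx0.le hx.2 (by linarith)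
        _ = 2 ^ (s-1) * b ^ (s-1) := Real.mul_rpow (by norm_num) hb0.le
    · rw [abs_of_nonpos (by linarith : s - 1 ≤ 0)]
      calc x ^ (s-1) ≤ (b / 2) ^ (s - 1) :=
            Real.rpow_le_rpow_of_nonpos (by linarith) hx.1 (by linarith)
        _ = b ^ (s-1) / 2 ^ (s-1) := Real.div_rpow hb0.le (by norm_num : (0:ℝ) ≤ 2) (s - 1)
        _ = 2 ^ (-(s-1)) * b ^ (s-1) := by
            rw [Real.rpow_neg (by norm_num)]
            field_simp
  have hconv : Convex ℝ S := convex_Icc _ _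
  have haS : a ∈ S := ⟨by linarith, hab⟩
  have hbS : b ∈ S := ⟨by linarith, by linarith⟩
  have := hconv.norm_image_sub_le_of_norm_hasDerivWithin_le hderiv hbound hbS haS
  simpa [Real.norm_eq_abs] using this

/-- For |n|/2 ≤ |k| < 2|n| and s ≥ 0, |⟨n⟩^s − ⟨k⟩^s| ≤ C ⟨n−k⟩ ⟨k⟩^{s−1}. -/
theorem stmt_0 (s : ℝ) (hs : 0 ≤ s) :
    ∃ C > 0, ∀ n k : ℤ, ((|n| : ℝ) / 2 ≤ (|k| : ℝ)) → ((|k| : ℝ) < 2 * (|n| : ℝ)) →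
      |jb n ^ s - jb k ^ s| ≤ C * jb (n - k) * jb k ^ (s - 1) := by
  refine ⟨s * 2 ^ |s - 1| + 1, by positivity, ?_⟩
  intro n k h1 h2
  have hjn : 1 ≤ jb n := one_le_jb n
  have hjk : 1 ≤ jb k := one_le_jb k
  -- comparability
  have hn2 : ((n:ℝ))^2 ≤ 4 * ((k:ℝ))^2 := by
    nlinarith [sq_abs (n:ℝ), sq_abs (k:ℝ), abs_nonneg (n:ℝ), abs_nonneg (k:ℝ)]
  have hk2 : ((k:ℝ))^2 ≤ 4 * ((n:ℝ))^2 := by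
    nlinarith [sq_abs (n:ℝ), sq_abs (k:ℝ), abs_nonneg (n:ℝ), abs_nonneg (k:ℝ)]
  have h4 : Real.sqrt 4 = 2 := by
    rw [show (4:ℝ) = 2^2 by norm_num, Real.sqrt_sq (by norm_num)]
  have hab : jb n ≤ 2 * jb k := by
    rw [jb, jb, show (2:ℝ) * Real.sqrt (1 + (k:ℝ)^2) =
      Real.sqrt (4 * (1 + (k:ℝ)^2)) by rw [Real.sqrt_mul (by norm_num), h4]]
    exact Real.sqrt_le_sqrt (by nlinarith)
  have hba : jb k ≤ 2 * jb n := by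
    rw [jb, jb, show (2:ℝ) * Real.sqrt (1 + (n:ℝ)^2) =
      Real.sqrt (4 * (1 + (n:ℝ)^2)) by rw [Real.sqrt_mul (by norm_num), h4]]
    exact Real.sqrt_le_sqrt (by nlinarith)
  have hkey := key s hs (jb n) (jb k) hjn hjk hab hba
  have hlip : |jb n - jb k| ≤ jb (n - k) := jb_sub_jb_abs_le n k
  have hjnk : (0:ℝ) ≤ jb (n - k) := le_trans zero_le_one (one_le_jb _)
  have hpow : (0:ℝ) ≤ jb k ^ (s - 1) := Real.rpow_nonneg (by linarith) _
  have h2p : (0:ℝ) < 2 ^ |s - 1| := Real.rpow_pos_of_pos (by norm_num) _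
  calc |jb n ^ s - jb k ^ s| ≤ s * 2 ^ |s - 1| * jb k ^ (s - 1) * |jb n - jb k| := hkey
    _ ≤ s * 2 ^ |s - 1| * jb k ^ (s - 1) * jb (n - k) :=
        mul_le_mul_of_nonneg_left hlip (by positivity)
    _ ≤ (s * 2 ^ |s - 1| + 1) * jb (n - k) * jb k ^ (s - 1) := by
        nlinarith [mul_nonneg hpow hjnk]
end
end

section
/- Let s₀, s₁, s₂ be real numbers with min(s₀+s₁, s₁+s₂, s₂+s₀) ≥ 0 and s₀+s₁+s₂ > 1/2. Then for all f ∈ H^{s₁}(𝕋) and g ∈ H^{s₂}(𝕋), the product satisfies ‖fg‖_{H^{−s₀}} ≤ C ‖f‖_{H^{s₁}} ‖g‖_{H^{s₂}}. -/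
/-!
Put `a = ⟨·⟩^{s₁} |f̂|`, `b = ⟨·⟩^{s₂} |ĝ|`, `σ = s₀ + s₁ + s₂`. The numbers `⟨n⟩`, `⟨n - k⟩`,
`⟨k⟩` satisfy the triangle inequalities, so the two largest of them are within a factor `2` of each
other. When the exponents have nonnegative pairwise sums this gives
`⟨n⟩^{-s₀} ⟨n - k⟩^{-s₁} ⟨k⟩^{-s₂} ≲ ⟨n⟩^{-σ} + ⟨n - k⟩^{-σ} + ⟨k⟩^{-σ}`, hence
`⟨n⟩^{-s₀} |(fg)^(n)| ≲ ⟨n⟩^{-σ} (a ⋆ b)(n) + (⟨·⟩^{-σ} a) ⋆ b (n) + a ⋆ (⟨·⟩^{-σ} b)(n)`.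
The first term is controlled in `ℓ²` by Cauchy–Schwarz, the other two by Young's inequality
`ℓ¹ ⋆ ℓ² → ℓ²` followed by Cauchy–Schwarz; every constant is a multiple of
`∑ ⟨k⟩^{-2σ}`, which is finite because `2σ > 1`. The estimates are carried out in `ℝ≥0∞`, where
sums need no summability side conditions.
-/

noncomputable section

/-- Sobolev H^s norm of a sequence of Fourier coefficients. -/
def hsNorm (s : ℝ) (a : ℤ → ℂ) : ℝ := Real.sqrt (∑' k : ℤ, jb k ^ (2 * s) * ‖a k‖ ^ 2)

/-- Fourier coefficients of the product fg: (fg)^(n) = Σ_k f̂(n−k) ĝ(k). -/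
def prodCoeff (f g : ℤ → ℂ) : ℤ → ℂ := fun n => ∑' k : ℤ, f (n - k) * g k

open scoped ENNReal NNReal
open MeasureTheory

theorem Real.rpow_le_two_rpow_abs {t : ℝ} (b : ℝ) (h₁ : 1 / 2 ≤ t) (h₂ : t ≤ 2) :
    t ^ b ≤ 2 ^ |b| := by
  rcases le_or_gt 0 b with hb | hb
  · rw [abs_of_nonneg hb]
    exact Real.rpow_le_rpow (by linarith) h₂ hb
  · calc t ^ b ≤ (2⁻¹ : ℝ) ^ b := Real.rpow_le_rpow_of_nonpos (by norm_num) (by linarith) hb.le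
      _ = 2 ^ |b| := by rw [abs_of_neg hb, Real.inv_rpow zero_le_two, Real.rpow_neg zero_le_two]

theorem rpow_neg_mul_rpow_neg_mul_rpow_neg_le_of_le {x y z : ℝ} (a b c : ℝ) (hx : 0 < x)
    (hxy : x ≤ y) (hxz : x ≤ z) (hy : y ≤ x + z) (hz : z ≤ x + y) (hbc : 0 ≤ b + c) :
    x ^ (-a) * y ^ (-b) * z ^ (-c) ≤ 2 ^ |b| * x ^ (-(a + b + c)) := by
  have hy0 : 0 < y := hx.trans_le hxy
  have hz0 : 0 < z := hx.trans_le hxz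
  -- `z / y ∈ [1/2, 2]` because `x` is the smallest side of the triangle `x, y, z`
  have hratio : (z / y) ^ b ≤ 2 ^ |b| := Real.rpow_le_two_rpow_abs b
    (by rw [le_div_iff₀ hy0]; linarith) (by rw [div_le_iff₀ hy0]; linarith)
  have hzb : z ^ b * z ^ (-b) = 1 := by rw [← Real.rpow_add hz0]; simp
  calc x ^ (-a) * y ^ (-b) * z ^ (-c) = x ^ (-a) * ((z / y) ^ b * z ^ (-(b + c))) := by
        rw [Real.div_rpow hz0.le hy0.le, div_eq_mul_inv, ← Real.rpow_neg hy0.le, neg_add,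
          Real.rpow_add hz0]
        linear_combination (x ^ (-a) * y ^ (-b) * z ^ (-c)) * hzb.symm
    _ ≤ x ^ (-a) * (2 ^ |b| * x ^ (-(b + c))) := by
        have := Real.rpow_le_rpow_of_nonpos hx hxz (neg_nonpos.mpr hbc)
        gcongr
    _ = 2 ^ |b| * x ^ (-(a + b + c)) := by
        rw [mul_left_comm, ← Real.rpow_add hx]
        ring_nf

theorem rpow_neg_mul_rpow_neg_mul_rpow_neg_le {x y z : ℝ} (a b c : ℝ) (hx : 0 < x) (hy : 0 < y)
    (hz : 0 < z) (hxyz : x ≤ y + z) (hyxz : y ≤ x + z) (hzxy : z ≤ x + y)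
    (hab : 0 ≤ a + b) (hbc : 0 ≤ b + c) (hca : 0 ≤ c + a) :
    x ^ (-a) * y ^ (-b) * z ^ (-c) ≤
      2 ^ (|a| + |b| + |c|) * (x ^ (-(a + b + c)) + y ^ (-(a + b + c)) + z ^ (-(a + b + c))) := by
  have hM : ∀ d, |d| ≤ |a| + |b| + |c| → (2 : ℝ) ^ |d| ≤ 2 ^ (|a| + |b| + |c|) :=
    fun d hd => Real.rpow_le_rpow_of_exponent_le one_le_two hd
  have := Real.rpow_nonneg hx.le (-(a + b + c))
  have := Real.rpow_nonneg hy.le (-(a + b + c))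
  have := Real.rpow_nonneg hz.le (-(a + b + c))
  have := abs_nonneg a; have := abs_nonneg b; have := abs_nonneg c
  obtain ⟨hxy, hxz⟩ | ⟨hyx, hyz⟩ | ⟨hzx, hzy⟩ :
      (x ≤ y ∧ x ≤ z) ∨ (y ≤ x ∧ y ≤ z) ∨ (z ≤ x ∧ z ≤ y) := by
    rcases le_total x y with h | h <;> rcases le_total y z with h' | h' <;>
      rcases le_total x z with h'' | h''
    all_goals first
      | exact Or.inl ⟨by linarith, by linarith⟩
      | exact Or.inr (Or.inl ⟨by linarith, by linarith⟩)
      | exact Or.inr (Or.inr ⟨by linarith, by linarith⟩)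
  · calc x ^ (-a) * y ^ (-b) * z ^ (-c) ≤ 2 ^ |b| * x ^ (-(a + b + c)) :=
        rpow_neg_mul_rpow_neg_mul_rpow_neg_le_of_le a b c hx hxy hxz hyxz hzxy hbc
      _ ≤ _ := mul_le_mul (hM b (by linarith)) (by linarith) (by positivity) (by positivity)
  · calc x ^ (-a) * y ^ (-b) * z ^ (-c) = y ^ (-b) * x ^ (-a) * z ^ (-c) := by ring
      _ ≤ 2 ^ |a| * y ^ (-(b + a + c)) :=
        rpow_neg_mul_rpow_neg_mul_rpow_neg_le_of_le b a c hy hyx hyz hxyz (by linarith)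
          (by linarith)
      _ ≤ _ := by
        rw [show b + a + c = a + b + c by ring]
        exact mul_le_mul (hM a (by linarith)) (by linarith) (by positivity) (by positivity)
  · calc x ^ (-a) * y ^ (-b) * z ^ (-c) = z ^ (-c) * x ^ (-a) * y ^ (-b) := by ring
      _ ≤ 2 ^ |a| * z ^ (-(c + a + b)) :=
        rpow_neg_mul_rpow_neg_mul_rpow_neg_le_of_le c a b hz hzx hzy (by linarith) (by linarith) hab
      _ ≤ _ := by
        rw [show c + a + b = a + b + c by ring]
        exact mul_le_mul (hM a (by linarith)) (by linarith) (by positivity) (by positivity)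

theorem ENNReal.tsum_mul_sq_le_sq_mul_sq {α : Type*} (u v : α → ℝ≥0∞) :
    (∑' i, u i * v i) ^ 2 ≤ (∑' i, u i ^ 2) * ∑' i, v i ^ 2 := by
  let : MeasurableSpace α := ⊤
  have h := ENNReal.lintegral_mul_le_Lp_mul_Lq Measure.count Real.HolderConjugate.two_two
    (measurable_from_top (f := u)).aemeasurable (measurable_from_top (f := v)).aemeasurable
  simp only [Pi.mul_apply, lintegral_count, ENNReal.rpow_two] at h
  calc (∑' i, u i * v i) ^ 2
      ≤ ((∑' i, u i ^ 2) ^ (1 / 2 : ℝ) * (∑' i, v i ^ 2) ^ (1 / 2 : ℝ)) ^ 2 := by gcongr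
    _ = (∑' i, u i ^ 2) * ∑' i, v i ^ 2 := by
      rw [mul_pow, ← ENNReal.rpow_natCast, ← ENNReal.rpow_natCast, ← ENNReal.rpow_mul,
        ← ENNReal.rpow_mul]
      norm_num

theorem ENNReal.tsum_mul_sq_le_tsum_mul_tsum_mul_sq {α : Type*} (w u : α → ℝ≥0∞) :
    (∑' i, w i * u i) ^ 2 ≤ (∑' i, w i) * ∑' i, w i * u i ^ 2 := by
  have hsqrt : ∀ x : ℝ≥0∞, (x ^ (1 / 2 : ℝ)) ^ 2 = x := fun x => by
    rw [← ENNReal.rpow_natCast, ← ENNReal.rpow_mul]; norm_num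
  have h := ENNReal.tsum_mul_sq_le_sq_mul_sq (fun i => w i ^ (1 / 2 : ℝ))
    (fun i => w i ^ (1 / 2 : ℝ) * u i)
  simp only [mul_pow, hsqrt, ← mul_assoc, ← pow_two] at h
  exact h

theorem ENNReal.add_add_sq_le (x y z : ℝ≥0∞) : (x + y + z) ^ 2 ≤ 3 * (x ^ 2 + y ^ 2 + z ^ 2) := by
  simpa [tsum_fintype, Fin.sum_univ_three, mul_comm] using
    ENNReal.tsum_mul_sq_le_sq_mul_sq ![x, y, z] 1

namespace SobolevProduct

def conv (u v : ℤ → ℝ≥0∞) (n : ℤ) : ℝ≥0∞ := ∑' k, u (n - k) * v k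

theorem conv_comm (u v : ℤ → ℝ≥0∞) : conv u v = conv v u := by
  ext n
  rw [conv, ← (Equiv.subLeft n).tsum_eq]
  simp [conv, mul_comm]

theorem tsum_comp_sub_left (u : ℤ → ℝ≥0∞) (n : ℤ) : ∑' k, u (n - k) = ∑' k, u k :=
  (Equiv.subLeft n).tsum_eq u

theorem tsum_comp_sub_right (u : ℤ → ℝ≥0∞) (k : ℤ) : ∑' n, u (n - k) = ∑' n, u n :=
  (Equiv.subRight k).tsum_eq u

theorem conv_sq_le (u v : ℤ → ℝ≥0∞) (n : ℤ) :
    conv u v n ^ 2 ≤ (∑' k, u k ^ 2) * ∑' k, v k ^ 2 :=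
  (ENNReal.tsum_mul_sq_le_sq_mul_sq (fun k => u (n - k)) v).trans_eq <| by
    rw [tsum_comp_sub_left (fun k => u k ^ 2)]

theorem tsum_conv_sq_le (u v : ℤ → ℝ≥0∞) :
    ∑' n, conv u v n ^ 2 ≤ (∑' k, u k) ^ 2 * ∑' k, v k ^ 2 := by
  calc ∑' n, conv u v n ^ 2
      ≤ ∑' n, (∑' k, u k) * ∑' k, u (n - k) * v k ^ 2 := by
        gcongr with n
        rw [← tsum_comp_sub_left u n]
        exact ENNReal.tsum_mul_sq_le_tsum_mul_tsum_mul_sq _ _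
    _ = (∑' k, u k) * ∑' k, v k ^ 2 * ∑' n, u (n - k) := by
        rw [ENNReal.tsum_mul_left, ENNReal.tsum_comm]
        simp only [← ENNReal.tsum_mul_left, mul_comm]
    _ = (∑' k, u k) ^ 2 * ∑' k, v k ^ 2 := by
        simp only [tsum_comp_sub_right, ENNReal.tsum_mul_right]
        ring

theorem tsum_conv_mul_sq_le (w u v : ℤ → ℝ≥0∞) :
    ∑' n, conv (w * u) v n ^ 2 ≤ (∑' k, w k ^ 2) * (∑' k, u k ^ 2) * ∑' k, v k ^ 2 :=
  (tsum_conv_sq_le _ _).trans (by gcongr; exact ENNReal.tsum_mul_sq_le_sq_mul_sq w u)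

theorem jb_pos (m : ℤ) : 0 < jb m := Real.sqrt_pos.mpr (by positivity)

theorem jb_sq (m : ℤ) : jb m ^ 2 = 1 + (m : ℝ) ^ 2 := Real.sq_sqrt (by positivity)

theorem abs_le_jb (m : ℤ) : |(m : ℝ)| ≤ jb m := Real.abs_le_sqrt (by linarith)

theorem jb_neg (m : ℤ) : jb (-m) = jb m := by simp [jb]

theorem jb_add_le (j k : ℤ) : jb (j + k) ≤ jb j + jb k := by
  rw [jb, Real.sqrt_le_left (by linarith [jb_pos j, jb_pos k])]
  have hjk : (j : ℝ) * k ≤ jb j * jb k := (le_abs_self _).trans <| by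
    rw [abs_mul]; exact mul_le_mul (abs_le_jb j) (abs_le_jb k) (abs_nonneg _) (jb_pos j).le
  push_cast
  nlinarith [jb_sq j, jb_sq k]

theorem jb_sub_le (j k : ℤ) : jb (j - k) ≤ jb j + jb k := by
  simpa [sub_eq_add_neg, jb_neg] using jb_add_le j (-k)

theorem summable_jb_rpow_neg {p : ℝ} (hp : 1 < p) : Summable fun m : ℤ => jb m ^ (-p) := by
  refine (Real.summable_abs_int_rpow hp).of_norm_bounded_eventually ?_
  filter_upwards [Filter.eventually_cofinite_ne 0] with m hm
  rw [Real.norm_of_nonneg (Real.rpow_nonneg (jb_pos m).le _)]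
  exact Real.rpow_le_rpow_of_nonpos (by positivity) (abs_le_jb m) (by linarith)

def bracketRpow (s : ℝ) (k : ℤ) : ℝ≥0∞ := ENNReal.ofReal (jb k ^ s)

theorem bracketRpow_mul (s t : ℝ) (k : ℤ) :
    bracketRpow s k * bracketRpow t k = bracketRpow (s + t) k := by
  rw [bracketRpow, bracketRpow, bracketRpow, ← ENNReal.ofReal_mul (by positivity [jb_pos k]),
    ← Real.rpow_add (jb_pos k)]

theorem bracketRpow_neg_mul_self (s : ℝ) (k : ℤ) : bracketRpow (-s) k * bracketRpow s k = 1 := by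
  rw [bracketRpow_mul, neg_add_cancel, bracketRpow, Real.rpow_zero, ENNReal.ofReal_one]

theorem bracketRpow_sq (s : ℝ) (k : ℤ) : bracketRpow s k ^ 2 = bracketRpow (2 * s) k := by
  rw [sq, bracketRpow_mul, two_mul]

def weightedCoeff (s : ℝ) (a : ℤ → ℂ) (k : ℤ) : ℝ≥0∞ := bracketRpow s k * ‖a k‖ₑ

theorem weightedCoeff_sq (s : ℝ) (a : ℤ → ℂ) (k : ℤ) :
    weightedCoeff s a k ^ 2 = ENNReal.ofReal (jb k ^ (2 * s) * ‖a k‖ ^ 2) := by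
  rw [weightedCoeff, mul_pow, bracketRpow_sq, bracketRpow,
    ENNReal.ofReal_mul (by positivity [jb_pos k]), ENNReal.ofReal_pow (norm_nonneg _), ofReal_norm]

theorem enorm_eq_bracketRpow_neg_mul_weightedCoeff (s : ℝ) (a : ℤ → ℂ) (k : ℤ) :
    ‖a k‖ₑ = bracketRpow (-s) k * weightedCoeff s a k := by
  rw [weightedCoeff, ← mul_assoc, bracketRpow_neg_mul_self, one_mul]

theorem summable_iff_tsum_weightedCoeff_sq_ne_top (s : ℝ) (a : ℤ → ℂ) :
    Summable (fun k => jb k ^ (2 * s) * ‖a k‖ ^ 2) ↔ ∑' k, weightedCoeff s a k ^ 2 ≠ ⊤ := by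
  have hnonneg : ∀ k, 0 ≤ jb k ^ (2 * s) * ‖a k‖ ^ 2 := fun k => by positivity [jb_pos k]
  simp only [weightedCoeff_sq]
  refine ⟨fun h => ?_, fun h => ?_⟩
  · rw [← ENNReal.ofReal_tsum_of_nonneg hnonneg h]
    exact ENNReal.ofReal_ne_top
  · simpa [ENNReal.toReal_ofReal (hnonneg _)] using ENNReal.summable_toReal h

-- Holds unconditionally: a divergent real `tsum` is `0`, and so is `(⊤ : ℝ≥0∞).toReal`.
theorem hsNorm_eq_sqrt_toReal (s : ℝ) (a : ℤ → ℂ) :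
    hsNorm s a = √((∑' k, weightedCoeff s a k ^ 2).toReal) := by
  simp only [weightedCoeff_sq, hsNorm]
  rw [ENNReal.tsum_toReal_eq fun _ => ENNReal.ofReal_ne_top]
  congr 1
  exact tsum_congr fun k => (ENNReal.toReal_ofReal (by positivity [jb_pos k])).symm

theorem tsum_bracketRpow_sq_ne_top {σ : ℝ} (hσ : 1 / 2 < σ) :
    ∑' k, bracketRpow (-σ) k ^ 2 ≠ ⊤ := by
  have hsum : Summable fun k : ℤ => jb k ^ (2 * -σ) := by
    simpa only [mul_neg] using summable_jb_rpow_neg (p := 2 * σ) (by linarith)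
  simp_rw [bracketRpow_sq, bracketRpow]
  rw [← ENNReal.ofReal_tsum_of_nonneg (fun k => by positivity [jb_pos k]) hsum]
  exact ENNReal.ofReal_ne_top

theorem hsNorm_le_of_tsum_weightedCoeff_sq_le {t s s' : ℝ} {h a b : ℤ → ℂ} {K : ℝ≥0∞}
    (hK : K ≠ ⊤) (ha : ∑' k, weightedCoeff s a k ^ 2 ≠ ⊤) (hb : ∑' k, weightedCoeff s' b k ^ 2 ≠ ⊤)
    (hle : ∑' k, weightedCoeff t h k ^ 2 ≤
      K * (∑' k, weightedCoeff s a k ^ 2) * ∑' k, weightedCoeff s' b k ^ 2) :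
    hsNorm t h ≤ √K.toReal * hsNorm s a * hsNorm s' b := by
  rw [hsNorm_eq_sqrt_toReal, hsNorm_eq_sqrt_toReal, hsNorm_eq_sqrt_toReal,
    ← Real.sqrt_mul ENNReal.toReal_nonneg, ← Real.sqrt_mul (by positivity), ← ENNReal.toReal_mul,
    ← ENNReal.toReal_mul]
  exact Real.sqrt_le_sqrt (ENNReal.toReal_mono (by finiteness) hle)

section Estimate

variable {s₀ s₁ s₂ : ℝ}

theorem bracketRpow_weight_le (h01 : 0 ≤ s₀ + s₁) (h12 : 0 ≤ s₁ + s₂) (h20 : 0 ≤ s₂ + s₀)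
    (n k : ℤ) :
    bracketRpow (-s₀) n * bracketRpow (-s₁) (n - k) * bracketRpow (-s₂) k ≤
      ENNReal.ofReal (2 ^ (|s₀| + |s₁| + |s₂|)) * (bracketRpow (-(s₀ + s₁ + s₂)) n +
        bracketRpow (-(s₀ + s₁ + s₂)) (n - k) + bracketRpow (-(s₀ + s₁ + s₂)) k) := by
  have hweight := rpow_neg_mul_rpow_neg_mul_rpow_neg_le s₀ s₁ s₂ (jb_pos n) (jb_pos (n - k))
    (jb_pos k) (by simpa using jb_add_le (n - k) k) (jb_sub_le n k)
    (by simpa using jb_sub_le n (n - k)) h01 h12 h20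
  simp only [bracketRpow]
  rw [← ENNReal.ofReal_mul (by positivity [jb_pos n]),
    ← ENNReal.ofReal_mul (by positivity [jb_pos n, jb_pos (n - k)]),
    ← ENNReal.ofReal_add (by positivity [jb_pos n]) (by positivity [jb_pos (n - k)]),
    ← ENNReal.ofReal_add (by positivity [jb_pos n, jb_pos (n - k)]) (by positivity [jb_pos k]),
    ← ENNReal.ofReal_mul (by positivity)]
  exact ENNReal.ofReal_le_ofReal hweight

theorem enorm_prodCoeff_le (f g : ℤ → ℂ) (n : ℤ) :
    ‖prodCoeff f g n‖ₑ ≤ ∑' k, ‖f (n - k)‖ₑ * ‖g k‖ₑ :=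
  enorm_tsum_le_tsum_enorm.trans_eq <| tsum_congr fun _ => enorm_mul _ _

theorem weightedCoeff_prodCoeff_le (h01 : 0 ≤ s₀ + s₁) (h12 : 0 ≤ s₁ + s₂)
    (h20 : 0 ≤ s₂ + s₀) (f g : ℤ → ℂ) (n : ℤ) :
    weightedCoeff (-s₀) (prodCoeff f g) n ≤
      ENNReal.ofReal (2 ^ (|s₀| + |s₁| + |s₂|)) *
        (bracketRpow (-(s₀ + s₁ + s₂)) n * conv (weightedCoeff s₁ f) (weightedCoeff s₂ g) n +
          conv (bracketRpow (-(s₀ + s₁ + s₂)) * weightedCoeff s₁ f) (weightedCoeff s₂ g) n +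
          conv (weightedCoeff s₁ f) (bracketRpow (-(s₀ + s₁ + s₂)) * weightedCoeff s₂ g) n) := by
  set w := bracketRpow (-(s₀ + s₁ + s₂))
  set a := weightedCoeff s₁ f
  set b := weightedCoeff s₂ g
  calc weightedCoeff (-s₀) (prodCoeff f g) n
      ≤ ∑' k, bracketRpow (-s₀) n * bracketRpow (-s₁) (n - k) * bracketRpow (-s₂) k *
          (a (n - k) * b k) := by
        rw [weightedCoeff]
        grw [enorm_prodCoeff_le f g n, ← ENNReal.tsum_mul_left]
        refine le_of_eq (tsum_congr fun k => ?_)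
        rw [enorm_eq_bracketRpow_neg_mul_weightedCoeff s₁ f,
          enorm_eq_bracketRpow_neg_mul_weightedCoeff s₂ g]
        ring
    _ ≤ ∑' k, ENNReal.ofReal (2 ^ (|s₀| + |s₁| + |s₂|)) * (w n + w (n - k) + w k) *
          (a (n - k) * b k) := by
        refine ENNReal.tsum_le_tsum fun k => ?_
        gcongr ?_ * _
        exact bracketRpow_weight_le h01 h12 h20 n k
    _ = _ := by
        simp only [conv, Pi.mul_apply, ← ENNReal.tsum_mul_left, ← ENNReal.tsum_add]
        exact tsum_congr fun k => by ring

theorem tsum_weightedCoeff_prodCoeff_sq_le (h01 : 0 ≤ s₀ + s₁) (h12 : 0 ≤ s₁ + s₂)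
    (h20 : 0 ≤ s₂ + s₀) (f g : ℤ → ℂ) :
    ∑' n, weightedCoeff (-s₀) (prodCoeff f g) n ^ 2 ≤
      9 * ENNReal.ofReal (2 ^ (|s₀| + |s₁| + |s₂|)) ^ 2 *
        (∑' k, bracketRpow (-(s₀ + s₁ + s₂)) k ^ 2) *
        (∑' k, weightedCoeff s₁ f k ^ 2) * ∑' k, weightedCoeff s₂ g k ^ 2 := by
  set M := ENNReal.ofReal (2 ^ (|s₀| + |s₁| + |s₂|))
  set w := bracketRpow (-(s₀ + s₁ + s₂))
  set a := weightedCoeff s₁ f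
  set b := weightedCoeff s₂ g
  have hdiag : ∑' n, (w n * conv a b n) ^ 2 ≤
      (∑' k, w k ^ 2) * (∑' k, a k ^ 2) * ∑' k, b k ^ 2 := by
    calc ∑' n, (w n * conv a b n) ^ 2
        ≤ ∑' n, w n ^ 2 * ((∑' k, a k ^ 2) * ∑' k, b k ^ 2) := by
          simp only [mul_pow]
          gcongr with n
          exact conv_sq_le a b n
      _ = _ := by rw [ENNReal.tsum_mul_right, mul_assoc]
  have hright : ∑' n, conv a (w * b) n ^ 2 ≤ (∑' k, w k ^ 2) * (∑' k, a k ^ 2) * ∑' k, b k ^ 2 := by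
    rw [conv_comm, mul_right_comm]
    exact tsum_conv_mul_sq_le w b a
  calc ∑' n, weightedCoeff (-s₀) (prodCoeff f g) n ^ 2
      ≤ ∑' n, M ^ 2 * (3 * ((w n * conv a b n) ^ 2 + conv (w * a) b n ^ 2 +
          conv a (w * b) n ^ 2)) := by
        gcongr with n
        grw [weightedCoeff_prodCoeff_le h01 h12 h20, mul_pow, ENNReal.add_add_sq_le]
    _ = M ^ 2 * 3 * (∑' n, (w n * conv a b n) ^ 2 + ∑' n, conv (w * a) b n ^ 2 +
          ∑' n, conv a (w * b) n ^ 2) := by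
        rw [ENNReal.tsum_mul_left, ENNReal.tsum_mul_left, ENNReal.tsum_add, ENNReal.tsum_add,
          mul_assoc]
    _ ≤ _ := by
        grw [hdiag, tsum_conv_mul_sq_le, hright]
        exact le_of_eq (by ring)

end Estimate

end SobolevProduct

open SobolevProduct

/-- Bilinear estimate: if min(s₀+s₁, s₁+s₂, s₂+s₀) ≥ 0 and s₀+s₁+s₂ > 1/2 then
‖fg‖_{H^{−s₀}} ≤ C ‖f‖_{H^{s₁}} ‖g‖_{H^{s₂}}. -/
theorem stmt_19 (s₀ s₁ s₂ : ℝ)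
    (h1 : 0 ≤ min (s₀ + s₁) (min (s₁ + s₂) (s₂ + s₀)))
    (h2 : 1 / 2 < s₀ + s₁ + s₂) :
    ∃ C > 0, ∀ f g : ℤ → ℂ,
      Summable (fun k : ℤ => jb k ^ (2 * s₁) * ‖f k‖ ^ 2) →
      Summable (fun k : ℤ => jb k ^ (2 * s₂) * ‖g k‖ ^ 2) →
      Summable (fun n : ℤ => jb n ^ (2 * (-s₀)) * ‖prodCoeff f g n‖ ^ 2) ∧
      hsNorm (-s₀) (prodCoeff f g) ≤ C * hsNorm s₁ f * hsNorm s₂ g := by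
  have h01 : 0 ≤ s₀ + s₁ := h1.trans (min_le_left _ _)
  have h12 : 0 ≤ s₁ + s₂ := h1.trans ((min_le_right _ _).trans (min_le_left _ _))
  have h20 : 0 ≤ s₂ + s₀ := h1.trans ((min_le_right _ _).trans (min_le_right _ _))
  set K := 9 * ENNReal.ofReal (2 ^ (|s₀| + |s₁| + |s₂|)) ^ 2 *
    ∑' k, bracketRpow (-(s₀ + s₁ + s₂)) k ^ 2
  have hK : K ≠ ⊤ := by
    have := tsum_bracketRpow_sq_ne_top h2
    finiteness
  have hK0 : K ≠ 0 := by
    simp only [K, ne_eq, mul_eq_zero, ENNReal.tsum_eq_zero, bracketRpow]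
    simp [Real.rpow_pos_of_pos, jb_pos]
  refine ⟨√K.toReal, Real.sqrt_pos.mpr (ENNReal.toReal_pos hK0 hK), fun f g hf hg => ?_⟩
  rw [summable_iff_tsum_weightedCoeff_sq_ne_top] at hf hg ⊢
  have hle := tsum_weightedCoeff_prodCoeff_sq_le h01 h12 h20 f g
  exact ⟨ne_top_of_le_ne_top (by finiteness) hle,
    hsNorm_le_of_tsum_weightedCoeff_sq_le hK hf hg hle⟩
end
end
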